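/- Let f be C² near the origin in ℝ² with an isolated equi-diagonal point of its Hessian at the origin (i.e. on a punctured neighborhood, (f_{xx}, f_{xy}, f_{yy}) never satisfies f_{xx} = f_{yy} and f_{xy} = 0 simultaneously). Then for g = f, viewed as g(z, z̄) with z = x+iy, one has g_{zz} = (1/4)((g_{xx} − g_{yy}) − 2 i g_{xy}), and the index at the origin of the eigen-flow of the Hessian matrix of g equals −(1/2)·ind₀(g_{zz}), where g_{zz} is regarded as a complex-valued nonvanishing function on the punctured neighborhood and ind₀ denotes its winding number around 0 along a small circle. -/

import Mathlib

open Real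

/-- The Wirtinger derivative `∂/∂z = (1/2)(∂/∂x - i ∂/∂y)` of a complex-valued function
of two real variables. -/
noncomputable def DzH (u : ℝ → ℝ → ℂ) (x y : ℝ) : ℂ :=
  (1 / 2) * (deriv (fun t => u t y) x - Complex.I * deriv (fun t => u x t) y)

noncomputable def gxxH (g : ℝ → ℝ → ℝ) (x y : ℝ) : ℝ :=
  deriv (fun t => deriv (fun s => g s y) t) x
noncomputable def gyyH (g : ℝ → ℝ → ℝ) (x y : ℝ) : ℝ :=
  deriv (fun t => deriv (fun s => g x s) t) y
noncomputable def gxyH (g : ℝ → ℝ → ℝ) (x y : ℝ) : ℝ :=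
  deriv (fun t => deriv (fun s => g s t) x) y

/-- `g_{zz} = (1/4)((g_{xx} - g_{yy}) - 2i g_{xy})`. -/
noncomputable def gzzH (g : ℝ → ℝ → ℝ) (x y : ℝ) : ℂ :=
  (1 / 4) * (((gxxH g x y - gyyH g x y : ℝ) : ℂ)
    - 2 * Complex.I * ((gxyH g x y : ℝ) : ℂ))

/-- The vector field `d_g = 2 g_{xy} ∂_x + (g_{yy} - g_{xx}) ∂_y` identifying the
eigen-flow of the Hessian of `g`. -/
noncomputable def dgH (g : ℝ → ℝ → ℝ) (x y : ℝ) : ℝ × ℝ :=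
  (2 * gxyH g x y, gyyH g x y - gxxH g x y)

/-!
The chain rule and the symmetry of second derivatives give
`∂_z ∂_z g = (1/4)(g_xx - g_yy - 2i g_xy)`. Read as a complex number,
`d_g = 2 g_xy - i (g_xx - g_yy) = -4i · conj g_zz`, so wherever `g_zz ≠ 0` the angle
lifts satisfy `α ≡ -π/2 - β (mod 2π)`. Since `ℝ → ℝ/2πℤ` is a covering map, two continuous
lifts that agree mod `2π` differ by a constant, hence `α + β` is constant along the circle.
-/

open Filter Topology Function Complex ComplexConjugate

section Slices

variable {E : Type*} [NormedAddCommGroup E] [NormedSpace ℝ E] {F : ℝ × ℝ → E}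
  {F' : ℝ × ℝ →L[ℝ] E} {x y : ℝ}

theorem HasFDerivAt.hasDerivAt_slice_fst (h : HasFDerivAt F F' (x, y)) :
    HasDerivAt (fun t => F (t, y)) (F' (1, 0)) x :=
  h.comp_hasDerivAt x ((hasDerivAt_id x).prodMk (hasDerivAt_const x y))

theorem HasFDerivAt.hasDerivAt_slice_snd (h : HasFDerivAt F F' (x, y)) :
    HasDerivAt (fun t => F (x, t)) (F' (0, 1)) y :=
  h.comp_hasDerivAt y ((hasDerivAt_const y x).prodMk (hasDerivAt_id y))

end Slices

section SecondDerivative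

variable {𝕜 E F : Type*} [NontriviallyNormedField 𝕜] [NormedAddCommGroup E]
  [NormedSpace 𝕜 E] [NormedAddCommGroup F] [NormedSpace 𝕜 F] {f : E → F} {p : E}

theorem ContDiffAt.eventually_differentiableAt (hf : ContDiffAt 𝕜 2 f p) :
    ∀ᶠ q in 𝓝 p, DifferentiableAt 𝕜 f q :=
  (hf.eventually (by simp)).mono fun _ hq => hq.differentiableAt two_ne_zero

theorem ContDiffAt.hasFDerivAt_fderiv_apply (hf : ContDiffAt 𝕜 2 f p) (v : E) :
    HasFDerivAt (fun q => fderiv 𝕜 f q v) ((fderiv 𝕜 (fderiv 𝕜 f) p).flip v) p := by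
  have hD : HasFDerivAt (fderiv 𝕜 f) (fderiv 𝕜 (fderiv 𝕜 f) p) p :=
    ((hf.fderiv_right (m := 1) le_rfl).differentiableAt one_ne_zero).hasFDerivAt
  exact (hD.clm_apply (hasFDerivAt_const v p)).congr_fderiv (by simp)

end SecondDerivative

section SecondPartials

variable {g : ℝ → ℝ → ℝ} {x y : ℝ}

theorem hasFDerivAt_deriv_slice_fst (hg : ContDiffAt ℝ 2 (uncurry g) (x, y)) :
    HasFDerivAt (fun q : ℝ × ℝ => deriv (fun s => g s q.2) q.1)
      ((fderiv ℝ (fderiv ℝ (uncurry g)) (x, y)).flip (1, 0)) (x, y) := by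
  refine (hg.hasFDerivAt_fderiv_apply (1, 0)).congr_of_eventuallyEq ?_
  filter_upwards [hg.eventually_differentiableAt] with q hq
  exact hq.hasFDerivAt.hasDerivAt_slice_fst.deriv

theorem hasFDerivAt_deriv_slice_snd (hg : ContDiffAt ℝ 2 (uncurry g) (x, y)) :
    HasFDerivAt (fun q : ℝ × ℝ => deriv (fun s => g q.1 s) q.2)
      ((fderiv ℝ (fderiv ℝ (uncurry g)) (x, y)).flip (0, 1)) (x, y) := by
  refine (hg.hasFDerivAt_fderiv_apply (0, 1)).congr_of_eventuallyEq ?_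
  filter_upwards [hg.eventually_differentiableAt] with q hq
  exact hq.hasFDerivAt.hasDerivAt_slice_snd.deriv

theorem deriv_deriv_slice_comm (hg : ContDiffAt ℝ 2 (uncurry g) (x, y)) :
    deriv (fun t => deriv (fun s => g t s) y) x =
      deriv (fun t => deriv (fun s => g s t) x) y := by
  rw [(hasFDerivAt_deriv_slice_snd hg).hasDerivAt_slice_fst.deriv,
    (hasFDerivAt_deriv_slice_fst hg).hasDerivAt_slice_snd.deriv]
  exact hg.isSymmSndFDerivAt (by simp) _ _

end SecondPartials

section Wirtinger

variable {g : ℝ → ℝ → ℝ} {x y : ℝ}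

theorem DzH_ofReal (hg : DifferentiableAt ℝ (uncurry g) (x, y)) :
    DzH (fun s t => (g s t : ℂ)) x y
      = 1 / 2 * (((deriv (fun s => g s y) x : ℝ) : ℂ)
          - I * ((deriv (fun t => g x t) y : ℝ) : ℂ)) := by
  have hx : HasDerivAt (fun s => g s y) (deriv (fun s => g s y) x) x :=
    hg.hasFDerivAt.hasDerivAt_slice_fst.differentiableAt.hasDerivAt
  have hy : HasDerivAt (fun t => g x t) (deriv (fun t => g x t) y) y :=
    hg.hasFDerivAt.hasDerivAt_slice_snd.differentiableAt.hasDerivAt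
  rw [DzH, hx.ofReal_comp.deriv, hy.ofReal_comp.deriv]

theorem hasDerivAt_DzH_ofReal_slice_fst (hg : ContDiffAt ℝ 2 (uncurry g) (x, y)) :
    HasDerivAt (fun t => DzH (fun s t => (g s t : ℂ)) t y)
      (1 / 2 * ((gxxH g x y : ℂ) - I * (gxyH g x y : ℂ))) x := by
  have hX := (hasFDerivAt_deriv_slice_fst hg).hasDerivAt_slice_fst.differentiableAt.hasDerivAt
  have hY := (hasFDerivAt_deriv_slice_snd hg).hasDerivAt_slice_fst.differentiableAt.hasDerivAt
  rw [deriv_deriv_slice_comm hg] at hY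
  refine ((hX.ofReal_comp.sub (hY.ofReal_comp.const_mul I)).const_mul (1 / 2)
    ).congr_of_eventuallyEq ?_
  have hslice : Tendsto (fun t : ℝ => (t, y)) (𝓝 x) (𝓝 (x, y)) :=
    (continuous_id.prodMk continuous_const).tendsto x
  filter_upwards [hslice.eventually hg.eventually_differentiableAt] with t ht
  exact DzH_ofReal ht

theorem hasDerivAt_DzH_ofReal_slice_snd (hg : ContDiffAt ℝ 2 (uncurry g) (x, y)) :
    HasDerivAt (fun t => DzH (fun s t => (g s t : ℂ)) x t)
      (1 / 2 * ((gxyH g x y : ℂ) - I * (gyyH g x y : ℂ))) y := by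
  have hX := (hasFDerivAt_deriv_slice_fst hg).hasDerivAt_slice_snd.differentiableAt.hasDerivAt
  have hY := (hasFDerivAt_deriv_slice_snd hg).hasDerivAt_slice_snd.differentiableAt.hasDerivAt
  refine ((hX.ofReal_comp.sub (hY.ofReal_comp.const_mul I)).const_mul (1 / 2)
    ).congr_of_eventuallyEq ?_
  have hslice : Tendsto (fun t : ℝ => (x, t)) (𝓝 y) (𝓝 (x, y)) :=
    (continuous_const.prodMk continuous_id).tendsto y
  filter_upwards [hslice.eventually hg.eventually_differentiableAt] with t ht
  exact DzH_ofReal ht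

theorem DzH_DzH_ofReal (hg : ContDiffAt ℝ 2 (uncurry g) (x, y)) :
    DzH (DzH fun s t => (g s t : ℂ)) x y = gzzH g x y := by
  rw [DzH, (hasDerivAt_DzH_ofReal_slice_fst hg).deriv, (hasDerivAt_DzH_ofReal_slice_snd hg).deriv,
    gzzH]
  push_cast
  linear_combination (gyyH g x y : ℂ) / 4 * I_sq

end Wirtinger

theorem Complex.coe_arg_eq_of_eq_norm_mul_exp {z : ℂ} {θ : ℝ} (hz : z ≠ 0)
    (h : z = ‖z‖ * exp (θ * I)) : (arg z : Real.Angle) = θ := by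
  rw [h, arg_real_mul _ (norm_pos_iff.2 hz), arg_exp_mul_I]
  simp

theorem Complex.coe_arg_equivRealProd_symm {v : ℝ × ℝ} {θ : ℝ}
    (hv : equivRealProd.symm v ≠ 0)
    (h : v = (√(v.1 ^ 2 + v.2 ^ 2) * Real.cos θ, √(v.1 ^ 2 + v.2 ^ 2) * Real.sin θ)) :
    (arg (equivRealProd.symm v) : Real.Angle) = θ := by
  refine coe_arg_eq_of_eq_norm_mul_exp hv ?_
  rw [norm_eq_sqrt_sq_add_sq, exp_mul_I, ← ofReal_cos, ← ofReal_sin]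
  conv_lhs => rw [h]
  apply Complex.ext <;> simp

theorem sub_eq_sub_of_coe_angle_eq {X : Type*} [TopologicalSpace X] [PreconnectedSpace X]
    {f g : X → ℝ} (hf : Continuous f) (hg : Continuous g)
    (h : ∀ x, (f x : Real.Angle) = g x) (a b : X) : f b - f a = g b - g a := by
  have := (AddCircle.isCoveringMap_coe (2 * π)).const_of_comp (hf.sub hg)
    (fun x x' => show ((f x - g x : ℝ) : Real.Angle) = ((f x' - g x' : ℝ) : Real.Angle) by
      rw [Real.Angle.coe_sub, Real.Angle.coe_sub, h, h, sub_self, sub_self]) a b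
  simp only [Pi.sub_apply] at this
  linarith

theorem dgH_eq_neg_four_I_mul_conj_gzzH (g : ℝ → ℝ → ℝ) (x y : ℝ) :
    equivRealProd.symm (dgH g x y) = -(4 * I) * conj (gzzH g x y) := by
  apply Complex.ext <;> simp [dgH, gzzH]

theorem gzzH_ne_zero {g : ℝ → ℝ → ℝ} {x y : ℝ}
    (h : ¬(gxxH g x y = gyyH g x y ∧ gxyH g x y = 0)) :
    gzzH g x y ≠ 0 := by
  refine fun h0 => h ⟨?_, ?_⟩
  · simpa [gzzH, sub_eq_zero] using congrArg re h0
  · simpa [gzzH] using congrArg im h0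

theorem coe_angle_eigenflow_eq {g : ℝ → ℝ → ℝ} {x y a b : ℝ} (hgzz : gzzH g x y ≠ 0)
    (ha : dgH g x y = (√((dgH g x y).1 ^ 2 + (dgH g x y).2 ^ 2) * Real.cos a,
      √((dgH g x y).1 ^ 2 + (dgH g x y).2 ^ 2) * Real.sin a))
    (hb : gzzH g x y = ‖gzzH g x y‖ * exp (b * I)) :
    (a : Real.Angle) = (-(π / 2) - b : ℝ) := by
  have hI : -(4 * I) ≠ 0 := by simp
  have hconj : conj (gzzH g x y) ≠ 0 := (map_ne_zero _).2 hgzz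
  have hd := dgH_eq_neg_four_I_mul_conj_gzzH g x y
  rw [← coe_arg_equivRealProd_symm (hd ▸ mul_ne_zero hI hconj) ha, hd,
    arg_mul_coe_angle hI hconj, arg_conj_coe_angle, coe_arg_eq_of_eq_norm_mul_exp hgzz hb,
    show -(4 * I) = ((4 : ℝ) : ℂ) * -I by push_cast; ring, arg_real_mul _ four_pos, arg_neg_I,
    Real.Angle.coe_sub, sub_eq_add_neg]

theorem mem_ball_polar {r ε : ℝ} (hr : |r| < ε) (t : ℝ) :
    (r * Real.cos t, r * Real.sin t) ∈ Metric.ball (0 : ℝ × ℝ) ε := by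
  rw [mem_ball_zero_iff, Prod.norm_def, max_lt_iff, Real.norm_eq_abs, Real.norm_eq_abs, abs_mul,
    abs_mul]
  exact ⟨(mul_le_of_le_one_right (abs_nonneg r) (Real.abs_cos_le_one t)).trans_lt hr,
    (mul_le_of_le_one_right (abs_nonneg r) (Real.abs_sin_le_one t)).trans_lt hr⟩

theorem polar_ne_zero {r : ℝ} (hr : r ≠ 0) (t : ℝ) :
    (r * Real.cos t, r * Real.sin t) ≠ (0 : ℝ × ℝ) := by
  intro h
  have h1 := congrArg Prod.fst h
  have h2 := congrArg Prod.snd h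
  simp only [Prod.fst_zero, Prod.snd_zero, mul_eq_zero, hr, false_or] at h1 h2
  simpa [h1, h2] using Real.sin_sq_add_cos_sq t

theorem hessian_eigenflow_index_eq_general (g : ℝ → ℝ → ℝ) (ε : ℝ)
    (hg : ContDiffOn ℝ 2 (fun p : ℝ × ℝ => g p.1 p.2) (Metric.ball 0 ε))
    (hiso : ∀ p : ℝ × ℝ, p ∈ Metric.ball (0 : ℝ × ℝ) ε → p ≠ 0 →
      ¬(gxxH g p.1 p.2 = gyyH g p.1 p.2 ∧ gxyH g p.1 p.2 = 0)) :
    (∀ p : ℝ × ℝ, p ∈ Metric.ball (0 : ℝ × ℝ) ε → p ≠ 0 →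
      DzH (DzH (fun s t => (g s t : ℂ))) p.1 p.2 = gzzH g p.1 p.2) ∧
    (∀ r : ℝ, 0 < r → r < ε → ∀ α β : ℝ → ℝ, Continuous α → Continuous β →
      (∀ t : ℝ, dgH g (r * Real.cos t) (r * Real.sin t)
        = (Real.sqrt ((dgH g (r * Real.cos t) (r * Real.sin t)).1 ^ 2
              + (dgH g (r * Real.cos t) (r * Real.sin t)).2 ^ 2) * Real.cos (α t),
           Real.sqrt ((dgH g (r * Real.cos t) (r * Real.sin t)).1 ^ 2
              + (dgH g (r * Real.cos t) (r * Real.sin t)).2 ^ 2) * Real.sin (α t))) →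
      (∀ t : ℝ, gzzH g (r * Real.cos t) (r * Real.sin t)
        = (‖gzzH g (r * Real.cos t) (r * Real.sin t)‖ : ℂ)
            * Complex.exp ((β t : ℂ) * Complex.I)) →
      α (2 * π) - α 0 = -(β (2 * π) - β 0)) := by
  refine ⟨fun p hp _ => DzH_DzH_ofReal (hg.contDiffAt (Metric.isOpen_ball.mem_nhds hp)), ?_⟩
  intro r hr hrε α β hα_cont hβ_cont hα hβ
  have hangle (t : ℝ) : (α t : Real.Angle) = (-(π / 2) - β t : ℝ) :=
    coe_angle_eigenflow_eq (gzzH_ne_zero (hiso _ (mem_ball_polar (by rwa [abs_of_pos hr]) t)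
      (polar_ne_zero hr.ne' t))) (hα t) (hβ t)
  have := sub_eq_sub_of_coe_angle_eq hα_cont (by fun_prop) hangle 0 (2 * π)
  linarith

/-- For `g` of class `C²` on a punctured neighborhood of the origin whose Hessian has an
isolated equi-diagonal point at the origin: `g_{zz} = (1/4)((g_{xx}-g_{yy}) - 2ig_{xy})`
(as the second Wirtinger derivative), and the index of the eigen-flow of the Hessian of
`g` at the origin equals `-(1/2)·ind₀(g_{zz})`; equivalently, the winding of the field
`d_g` along a small circle is minus the winding of `g_{zz}`: for continuous angle lifts
`α` of `d_g` and `β` of `g_{zz}` along the circle, `α(2π) - α(0) = -(β(2π) - β(0))`. -/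
theorem hessian_eigenflow_index_eq (g : ℝ → ℝ → ℝ) (ε : ℝ) (hε : 0 < ε)
    (hg : ContDiffOn ℝ 2 (fun p : ℝ × ℝ => g p.1 p.2) (Metric.ball 0 ε))
    (hiso : ∀ p : ℝ × ℝ, p ∈ Metric.ball (0 : ℝ × ℝ) ε → p ≠ 0 →
      ¬(gxxH g p.1 p.2 = gyyH g p.1 p.2 ∧ gxyH g p.1 p.2 = 0)) :
    (∀ p : ℝ × ℝ, p ∈ Metric.ball (0 : ℝ × ℝ) ε → p ≠ 0 →
      DzH (DzH (fun s t => (g s t : ℂ))) p.1 p.2 = gzzH g p.1 p.2) ∧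
    (∀ r : ℝ, 0 < r → r < ε → ∀ α β : ℝ → ℝ, Continuous α → Continuous β →
      (∀ t : ℝ, dgH g (r * Real.cos t) (r * Real.sin t)
        = (Real.sqrt ((dgH g (r * Real.cos t) (r * Real.sin t)).1 ^ 2
              + (dgH g (r * Real.cos t) (r * Real.sin t)).2 ^ 2) * Real.cos (α t),
           Real.sqrt ((dgH g (r * Real.cos t) (r * Real.sin t)).1 ^ 2
              + (dgH g (r * Real.cos t) (r * Real.sin t)).2 ^ 2) * Real.sin (α t))) →
      (∀ t : ℝ, gzzH g (r * Real.cos t) (r * Real.sin t)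
        = (‖gzzH g (r * Real.cos t) (r * Real.sin t)‖ : ℂ)
            * Complex.exp ((β t : ℂ) * Complex.I)) →
      α (2 * π) - α 0 = -(β (2 * π) - β 0)) :=
  hessian_eigenflow_index_eq_general g ε hg hiso
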